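/- arXiv:1707.04697 — 7 statements merged into one kernel-verified Lean document; each statement's English description precedes it below -/
import Mathlib

section
/- Let R be a commutative ring with identity which is not an integral domain, and suppose that the set of nonzero annihilating ideals of R has at least two elements. Then the annihilator-ideal graph A_I(R) is connected with diameter at most 2; moreover, if A_I(R) contains a cycle, then its girth is at most 4. -/
/-- The vertex set of the annihilator-ideal/annihilating-ideal graphs:
nonzero ideals with nonzero annihilator. -/
abbrev AnnVert (R : Type*) [CommRing R] : Type _ :=
  {I : Ideal R // I ≠ ⊥ ∧ Submodule.annihilator I ≠ ⊥}

/-- The annihilator-ideal graph `A_I(R)`. -/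
def annihilatorIdealGraph (R : Type*) [CommRing R] : SimpleGraph (AnnVert R) where
  Adj I J := I ≠ J ∧
    ((Submodule.annihilator (I.1 * J.1) : Ideal R) : Set R) ≠
      ↑(Submodule.annihilator I.1) ∪ ↑(Submodule.annihilator J.1)
  symm := by
    constructor
    rintro I J ⟨hne, h⟩
    exact ⟨hne.symm, by rwa [mul_comm, Set.union_comm]⟩
  loopless := by constructor; rintro I ⟨h, -⟩; exact h rfl

/-- The annihilating-ideal graph `𝔸𝔾(R)`. -/
def annihilatingIdealGraph (R : Type*) [CommRing R] : SimpleGraph (AnnVert R) where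
  Adj I J := I ≠ J ∧ I.1 * J.1 = ⊥
  symm := by constructor; rintro I J ⟨hne, h⟩; exact ⟨hne.symm, by rwa [mul_comm]⟩
  loopless := by constructor; rintro I ⟨h, -⟩; exact h rfl

/-- `G` is a complete bipartite graph with parts `s` and `t`. -/
def SimpleGraph.IsCompleteBipartiteWith {V : Type*} (G : SimpleGraph V) (s t : Set V) : Prop :=
  Disjoint s t ∧ s ∪ t = Set.univ ∧
    ∀ u v, G.Adj u v ↔ (u ∈ s ∧ v ∈ t) ∨ (u ∈ t ∧ v ∈ s)

/-- `G` is a star graph: complete bipartite with one part a single vertex and the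
other part nonempty. -/
def SimpleGraph.IsStarGraph {V : Type*} (G : SimpleGraph V) : Prop :=
  ∃ (c : V) (t : Set V), t.Nonempty ∧ G.IsCompleteBipartiteWith {c} t

/-!
If `I ≠ J` are not adjacent then `Ann(IJ)`, an additive subgroup, is the union of `Ann I` and
`Ann J`, so one of them, say `Ann I`, contains the other; then `Ann I` is a common neighbour of `I`
and `J`, killing both. This gives diameter at most `2`.

Suppose the graph has a cycle but no cycle of length `3` or `4`. For a path `a - b - c` with
`a ≠ c`, the vertices `a` and `c` are not adjacent and their common neighbour found above must be
`b`, so `ab = 0`. A cycle yields a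
non-backtracking path `e - a - b - c - d`, all of whose consecutive products vanish. The ideal
`L = ac` is nonzero and kills `b` and `d`, so `b - L - d - c` is a `4`-cycle unless `L = c`;
in that case `c ⊆ a` kills `e`, and `e - a - b - c` is a `4`-cycle.
-/

open Submodule

namespace SimpleGraph

variable {V : Type*} {G : SimpleGraph V}

lemma ediam_le_two_of_forall_adj_or_exists_adj_adj
    (h : ∀ u v, u ≠ v → G.Adj u v ∨ ∃ w, G.Adj u w ∧ G.Adj w v) : G.ediam ≤ 2 := by
  refine ediam_le_of_edist_le fun u v => ?_
  obtain rfl | huv := eq_or_ne u v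
  · simp
  rcases h u v huv with huv | ⟨w, huw, hwv⟩
  · exact (edist_le_one_iff_adj_or_eq.mpr (Or.inl huv)).trans (by norm_num)
  · exact (edist_le (.cons huw (.cons hwv .nil))).trans (by simp)

lemma egirth_le_three {a b c : V} (hab : G.Adj a b) (hbc : G.Adj b c) (hca : G.Adj c a) :
    G.egirth ≤ 3 := by
  have hw : (Walk.cons hab (.cons hbc (.cons hca .nil))).IsCycle := by
    simp [Walk.isCycle_def, Walk.isTrail_def, hab.ne, hbc.ne, hca.ne, hab.ne', hca.ne']
  simpa using egirth_le_length hw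

lemma egirth_le_four {a b c d : V} (hac : a ≠ c) (hbd : b ≠ d) (hab : G.Adj a b)
    (hbc : G.Adj b c) (hcd : G.Adj c d) (hda : G.Adj d a) : G.egirth ≤ 4 := by
  have hw : (Walk.cons hab (.cons hbc (.cons hcd (.cons hda .nil)))).IsCycle := by
    simp [Walk.isCycle_def, Walk.isTrail_def, hab.ne, hbc.ne, hcd.ne, hda.ne, hab.ne', hda.ne',
      hac, hbd, hac.symm]
  simpa using egirth_le_length hw

lemma Walk.IsCycle.exists_nonbacktracking_adj_chain {u : V} {w : G.Walk u u}
    (hw : w.IsCycle) : ∃ e a b c d, G.Adj e a ∧ G.Adj a b ∧ G.Adj b c ∧ G.Adj c d ∧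
      e ≠ b ∧ a ≠ c ∧ b ≠ d := by
  have hlen := hw.three_le_length
  have hac : w.getVert 0 ≠ w.getVert 2 :=
    hw.getVert_sub_one_ne_getVert_add_one (i := 1) (by omega)
  have hbd : w.getVert 1 ≠ w.getVert 3 :=
    hw.getVert_sub_one_ne_getVert_add_one (i := 2) (by omega)
  refine ⟨w.penultimate, u, w.snd, w.getVert 2, w.getVert 3, w.adj_penultimate hw.not_nil,
    w.adj_snd hw.not_nil, w.adj_getVert_succ (i := 1) (by omega),
    w.adj_getVert_succ (i := 2) (by omega), hw.snd_ne_penultimate.symm, ?_, hbd⟩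
  rwa [Walk.getVert_zero] at hac

end SimpleGraph

section

variable {R : Type*} [CommRing R]

lemma Submodule.annihilator_ne_bot_of_smul_eq_bot {M : Type*} [AddCommGroup M] [Module R M]
    {I : Ideal R} {N : Submodule R M} (hI : I ≠ ⊥) (h : I • N = ⊥) :
    annihilator N ≠ ⊥ :=
  fun hN => hI (eq_bot_iff.mpr (hN ▸ le_annihilator_iff.mpr h))

def AnnVert.annihilator (I : AnnVert R) : AnnVert R :=
  ⟨Submodule.annihilator I.1, I.2.2,
    annihilator_ne_bot_of_smul_eq_bot I.2.1 (mul_annihilator I.1)⟩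

namespace annihilatorIdealGraph

lemma adj_of_mul_eq_bot {I J : AnnVert R} (hne : I ≠ J) (h : I.1 * J.1 = ⊥) :
    (annihilatorIdealGraph R).Adj I J := by
  refine ⟨hne, fun hunion => ?_⟩
  have hone : (1 : R) ∈ ((annihilator (I.1 * J.1) : Ideal R) : Set R) := by
    simp [h, annihilator_bot]
  rw [hunion] at hone
  rcases hone with hI | hJ
  · exact I.2.1 (annihilator_eq_top_iff.mp ((Ideal.eq_top_iff_one _).mpr hI))
  · exact J.2.1 (annihilator_eq_top_iff.mp ((Ideal.eq_top_iff_one _).mpr hJ))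

lemma annihilator_le_or_le_of_not_adj {I J : AnnVert R} (hne : I ≠ J)
    (h : ¬(annihilatorIdealGraph R).Adj I J) :
    annihilator I.1 ≤ annihilator J.1 ∨ annihilator J.1 ≤ annihilator I.1 := by
  have hunion : ((annihilator (I.1 * J.1) : Ideal R) : Set R) =
      (annihilator I.1 : Set R) ∪ annihilator J.1 := by
    by_contra hne'
    exact h ⟨hne, hne'⟩
  rcases (AddSubgroupClass.subset_union (S := Ideal R) (H := annihilator (I.1 * J.1))).mp
    hunion.subset with hI | hJ
  · exact .inr ((annihilator_mono Ideal.mul_le_right).trans hI)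
  · exact .inl ((annihilator_mono Ideal.mul_le_left).trans hJ)

lemma exists_mul_eq_bot_of_annihilator_le {I J : AnnVert R} (hIJ : I.1 * J.1 ≠ ⊥)
    (hle : annihilator I.1 ≤ annihilator J.1) :
    ∃ K : AnnVert R, K ≠ I ∧ K ≠ J ∧ K.1 * I.1 = ⊥ ∧ K.1 * J.1 = ⊥ := by
  have hKJ : annihilator I.1 * J.1 = ⊥ := le_annihilator_iff.mp hle
  refine ⟨I.annihilator, fun hKI => hIJ ?_, fun hKJ' => hIJ ?_, annihilator_mul I.1, hKJ⟩
  · rwa [← congrArg Subtype.val hKI]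
  · rw [← congrArg Subtype.val hKJ']
    exact mul_annihilator I.1

lemma exists_mul_eq_bot_of_not_adj {I J : AnnVert R} (hne : I ≠ J)
    (h : ¬(annihilatorIdealGraph R).Adj I J) :
    ∃ K : AnnVert R, K ≠ I ∧ K ≠ J ∧ K.1 * I.1 = ⊥ ∧ K.1 * J.1 = ⊥ := by
  have hIJ : I.1 * J.1 ≠ ⊥ := fun h0 => h (adj_of_mul_eq_bot hne h0)
  rcases annihilator_le_or_le_of_not_adj hne h with hle | hle
  · exact exists_mul_eq_bot_of_annihilator_le hIJ hle
  · obtain ⟨K, hKJ, hKI, hKJ0, hKI0⟩ :=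
      exists_mul_eq_bot_of_annihilator_le (by rwa [mul_comm]) hle
    exact ⟨K, hKI, hKJ, hKI0, hKJ0⟩

lemma adj_or_exists_adj_adj {I J : AnnVert R} (hne : I ≠ J) :
    (annihilatorIdealGraph R).Adj I J ∨
      ∃ K, (annihilatorIdealGraph R).Adj I K ∧ (annihilatorIdealGraph R).Adj K J := by
  by_cases h : (annihilatorIdealGraph R).Adj I J
  · exact .inl h
  obtain ⟨K, hKI, hKJ, hKI0, hKJ0⟩ := exists_mul_eq_bot_of_not_adj hne h
  exact .inr ⟨K, (adj_of_mul_eq_bot hKI hKI0).symm, adj_of_mul_eq_bot hKJ hKJ0⟩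

lemma ediam_le_two : (annihilatorIdealGraph R).ediam ≤ 2 :=
  SimpleGraph.ediam_le_two_of_forall_adj_or_exists_adj_adj fun _ _ => adj_or_exists_adj_adj

lemma not_adj_of_adj_of_adj (hG : 4 < (annihilatorIdealGraph R).egirth) {a b c : AnnVert R}
    (hab : (annihilatorIdealGraph R).Adj a b) (hbc : (annihilatorIdealGraph R).Adj b c) :
    ¬(annihilatorIdealGraph R).Adj a c :=
  fun hac => (SimpleGraph.egirth_le_three hab hbc hac.symm).not_gt (lt_trans (by norm_num) hG)

lemma mul_eq_bot_of_adj_of_adj (hG : 4 < (annihilatorIdealGraph R).egirth) {a b c : AnnVert R}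
    (hab : (annihilatorIdealGraph R).Adj a b) (hbc : (annihilatorIdealGraph R).Adj b c)
    (hac : a ≠ c) : a.1 * b.1 = ⊥ := by
  obtain ⟨K, hKa, hKc, hKa0, hKc0⟩ :=
    exists_mul_eq_bot_of_not_adj hac (not_adj_of_adj_of_adj hG hab hbc)
  obtain rfl : K = b := by
    by_contra hKb
    exact (SimpleGraph.egirth_le_four hac (Ne.symm hKb) hab hbc
      (adj_of_mul_eq_bot hKc hKc0).symm (adj_of_mul_eq_bot hKa hKa0)).not_gt hG
  rwa [mul_comm]

lemma egirth_le_four_of_adj_chain {e a b c d : AnnVert R}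
    (hea : (annihilatorIdealGraph R).Adj e a) (hab : (annihilatorIdealGraph R).Adj a b)
    (hbc : (annihilatorIdealGraph R).Adj b c) (hcd : (annihilatorIdealGraph R).Adj c d)
    (heb : e ≠ b) (hac : a ≠ c) (hbd : b ≠ d) : (annihilatorIdealGraph R).egirth ≤ 4 := by
  by_contra! hG
  have hea0 : e.1 * a.1 = ⊥ := mul_eq_bot_of_adj_of_adj hG hea hab heb
  have hab0 : a.1 * b.1 = ⊥ := mul_eq_bot_of_adj_of_adj hG hab hbc hac
  have hdc0 : d.1 * c.1 = ⊥ := mul_eq_bot_of_adj_of_adj hG hcd.symm hbc.symm hbd.symm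
  have hLb0 : a.1 * c.1 * b.1 = ⊥ := by rw [mul_right_comm, hab0, Submodule.bot_mul]
  have hLd0 : a.1 * c.1 * d.1 = ⊥ := by rw [mul_assoc, mul_comm c.1, hdc0, Submodule.mul_bot]
  have hL : a.1 * c.1 ≠ ⊥ :=
    fun h => not_adj_of_adj_of_adj hG hab hbc (adj_of_mul_eq_bot hac h)
  let L : AnnVert R :=
    ⟨a.1 * c.1, hL, annihilator_ne_bot_of_smul_eq_bot b.2.1 (by rwa [smul_eq_mul, mul_comm])⟩
  have hnbd := not_adj_of_adj_of_adj hG hbc hcd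
  have hLb : L ≠ b := fun h => hnbd (adj_of_mul_eq_bot hbd (by rw [← h]; exact hLd0))
  have hLd : L ≠ d := fun h => hnbd (adj_of_mul_eq_bot hbd (by rw [← h, mul_comm]; exact hLb0))
  by_cases hLc : L = c
  · have hce0 : c.1 * e.1 = ⊥ := by
      rw [← hLc, mul_right_comm, mul_comm a.1, hea0, Submodule.bot_mul]
    have hce : c ≠ e := by
      rintro rfl
      exact not_adj_of_adj_of_adj hG hab hbc hea.symm
    exact (SimpleGraph.egirth_le_four heb hac hea hab hbc
      (adj_of_mul_eq_bot hce hce0)).not_gt hG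
  · exact (SimpleGraph.egirth_le_four hbd hLc (adj_of_mul_eq_bot hLb hLb0).symm
      (adj_of_mul_eq_bot hLd hLd0) hcd.symm hbc.symm).not_gt hG

end annihilatorIdealGraph

end

theorem stmt0_general (R : Type*) [CommRing R]
    (htwo : ∃ I J : AnnVert R, I ≠ J) :
    (annihilatorIdealGraph R).Connected ∧
    (annihilatorIdealGraph R).ediam ≤ 2 ∧
    ((∃ (v : AnnVert R) (w : (annihilatorIdealGraph R).Walk v v), w.IsCycle) →
      (annihilatorIdealGraph R).egirth ≤ 4) := by
  obtain ⟨I, -, -⟩ := htwo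
  have : Nonempty (AnnVert R) := ⟨I⟩
  have hdiam := annihilatorIdealGraph.ediam_le_two (R := R)
  refine ⟨SimpleGraph.connected_of_ediam_ne_top (ne_top_of_le_ne_top (by simp) hdiam),
    hdiam, ?_⟩
  rintro ⟨_, _, hw⟩
  obtain ⟨e, a, b, c, d, hea, hab, hbc, hcd, heb, hac, hbd⟩ :=
    hw.exists_nonbacktracking_adj_chain
  exact annihilatorIdealGraph.egirth_le_four_of_adj_chain hea hab hbc hcd heb hac hbd

theorem stmt0 (R : Type*) [CommRing R] [Nontrivial R] (hdom : ¬IsDomain R)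
    (htwo : ∃ I J : AnnVert R, I ≠ J) :
    (annihilatorIdealGraph R).Connected ∧
    (annihilatorIdealGraph R).ediam ≤ 2 ∧
    ((∃ (v : AnnVert R) (w : (annihilatorIdealGraph R).Walk v v), w.IsCycle) →
      (annihilatorIdealGraph R).egirth ≤ 4) :=
  stmt0_general R htwo
end

section
/- Let R be a reduced commutative ring with identity which is not an integral domain, and suppose the annihilator-ideal graph A_I(R) is not equal to the annihilating-ideal graph 𝔸𝔾(R). Then the girth of A_I(R) equals 3; moreover, there exists a cycle C of length three in A_I(R) such that no edge of C is an edge of 𝔸𝔾(R). -/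
namespace Ideal

variable {R : Type*} [CommRing R]

lemma le_annihilator_iff_mul_eq_bot {I J : Ideal R} : I ≤ Submodule.annihilator J ↔ I * J = ⊥ :=
  Submodule.le_annihilator_iff

lemma annihilator_union_subset_annihilator_mul (I J : Ideal R) :
    (Submodule.annihilator I : Set R) ∪ Submodule.annihilator J ⊆
      Submodule.annihilator (I * J) :=
  Set.union_subset (Submodule.annihilator_mono mul_le_left)
    (Submodule.annihilator_mono mul_le_right)

lemma annihilator_mul_ne_union {I J K : Ideal R} (hK : K * (I * J) = ⊥) (hKI : K * I ≠ ⊥)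
    (hKJ : K * J ≠ ⊥) :
    (Submodule.annihilator (I * J) : Set R) ≠
      ↑(Submodule.annihilator I) ∪ ↑(Submodule.annihilator J) := by
  intro h
  have hK' : (K : Set R) ⊆ ↑(Submodule.annihilator I) ∪ ↑(Submodule.annihilator J) :=
    h ▸ le_annihilator_iff_mul_eq_bot.2 hK
  rcases subset_union.1 hK' with hI | hJ
  · exact hKI (le_annihilator_iff_mul_eq_bot.1 hI)
  · exact hKJ (le_annihilator_iff_mul_eq_bot.1 hJ)

lemma annihilator_mul_mul_ne_bot_left {I J : Ideal R}
    (h : (Submodule.annihilator (I * J) : Set R) ≠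
      ↑(Submodule.annihilator I) ∪ ↑(Submodule.annihilator J)) :
    Submodule.annihilator (I * J) * I ≠ ⊥ := by
  intro hI
  have hAnn : Submodule.annihilator (I * J) = Submodule.annihilator I :=
    le_antisymm (le_annihilator_iff_mul_eq_bot.2 hI) (Submodule.annihilator_mono mul_le_left)
  apply h
  rw [hAnn, Set.union_eq_left.2]
  exact hAnn ▸ (annihilator_union_subset_annihilator_mul I J).trans' Set.subset_union_right

lemma annihilator_mul_mul_ne_bot_right {I J : Ideal R}
    (h : (Submodule.annihilator (I * J) : Set R) ≠
      ↑(Submodule.annihilator I) ∪ ↑(Submodule.annihilator J)) :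
    Submodule.annihilator (I * J) * J ≠ ⊥ := by
  have hJ := annihilator_mul_mul_ne_bot_left (I := J) (J := I) (by rwa [mul_comm J, Set.union_comm])
  rwa [mul_comm J] at hJ

lemma mul_eq_bot_of_mul_self_mul_eq_bot [IsReduced R] {I J : Ideal R} (h : I * I * J = ⊥) :
    I * J = ⊥ := by
  refine (pow_eq_bot two_ne_zero).1 (le_bot_iff.1 ?_)
  calc (I * J) ^ 2 = I * I * J * J := by ring
    _ ≤ I * I * J := mul_le_left
    _ = ⊥ := h

end Ideal

lemma SimpleGraph.egirth_eq_three {V : Type*} {G : SimpleGraph V} {a b c : V} (hab : G.Adj a b)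
    (hbc : G.Adj b c) (hca : G.Adj c a) : G.egirth = 3 := by
  classical
  obtain ⟨u, w, hw, hlen⟩ := is3Clique_iff_exists_cycle_length_three.1
    ⟨{a, b, c}, is3Clique_triple_iff.2 ⟨hab, hca.symm, hbc⟩⟩
  refine le_antisymm ?_ three_le_egirth
  simpa [hlen] using egirth_le_length hw

section AnnihilatorGraphs

variable {R : Type*} [CommRing R]

lemma annihilatingIdealGraph_le_annihilatorIdealGraph :
    annihilatingIdealGraph R ≤ annihilatorIdealGraph R := by
  rintro I J ⟨hIJ, hmul⟩
  refine ⟨hIJ, fun h => ?_⟩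
  have h1 : (1 : R) ∈ (Submodule.annihilator (I.1 * J.1) : Set R) := by
    simp [hmul, Submodule.annihilator_bot]
  rcases h ▸ h1 with hI | hJ
  · exact I.2.1 (Submodule.annihilator_eq_top_iff.1 ((Ideal.eq_top_iff_one _).2 hI))
  · exact J.2.1 (Submodule.annihilator_eq_top_iff.1 ((Ideal.eq_top_iff_one _).2 hJ))

lemma exists_adj_annihilatorIdealGraph_not_adj_annihilatingIdealGraph
    (h : annihilatorIdealGraph R ≠ annihilatingIdealGraph R) :
    ∃ I J, (annihilatorIdealGraph R).Adj I J ∧ ¬ (annihilatingIdealGraph R).Adj I J := by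
  by_contra! hcon
  exact h (le_antisymm hcon annihilatingIdealGraph_le_annihilatorIdealGraph)

lemma not_adj_annihilatingIdealGraph_of_mul_ne_bot {I J : AnnVert R} (h : I.1 * J.1 ≠ ⊥) :
    ¬ (annihilatingIdealGraph R).Adj I J :=
  fun hadj => h hadj.2

lemma annihilatorIdealGraph_adj_of_mul_eq_bot [IsReduced R] {a b c : AnnVert R}
    (hbc : b.1 * c.1 ≠ ⊥) (hca : c.1 * a.1 ≠ ⊥) (habc : a.1 * b.1 * c.1 = ⊥) :
    (annihilatorIdealGraph R).Adj a b := by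
  refine ⟨?_, Ideal.annihilator_mul_ne_union (by rwa [mul_comm]) hca (by rwa [mul_comm])⟩
  rintro rfl
  exact hca (mul_comm a.1 c.1 ▸ Ideal.mul_eq_bot_of_mul_self_mul_eq_bot habc)

end AnnihilatorGraphs

theorem stmt1_general (R : Type*) [CommRing R] [IsReduced R]
    (hne : annihilatorIdealGraph R ≠ annihilatingIdealGraph R) :
    (annihilatorIdealGraph R).egirth = 3 ∧
    ∃ a b c : AnnVert R,
      (annihilatorIdealGraph R).Adj a b ∧ (annihilatorIdealGraph R).Adj b c ∧
      (annihilatorIdealGraph R).Adj c a ∧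
      ¬ (annihilatingIdealGraph R).Adj a b ∧ ¬ (annihilatingIdealGraph R).Adj b c ∧
      ¬ (annihilatingIdealGraph R).Adj c a := by
  obtain ⟨a, b, hadj, hnot⟩ := exists_adj_annihilatorIdealGraph_not_adj_annihilatingIdealGraph hne
  have hab : a.1 * b.1 ≠ ⊥ := fun h => hnot ⟨hadj.1, h⟩
  set K := Submodule.annihilator (a.1 * b.1)
  have hKa : K * a.1 ≠ ⊥ := Ideal.annihilator_mul_mul_ne_bot_left hadj.2
  have hKb : K * b.1 ≠ ⊥ := Ideal.annihilator_mul_mul_ne_bot_right hadj.2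
  have habK : a.1 * b.1 * K = ⊥ := by
    rw [mul_comm, ← Ideal.le_annihilator_iff_mul_eq_bot]
  let c : AnnVert R := ⟨K, fun h => hKa (by simp [h]),
    fun h => hab (le_bot_iff.1 ((Ideal.le_annihilator_iff_mul_eq_bot.2 habK).trans h.le))⟩
  have hbc : b.1 * c.1 ≠ ⊥ := by rwa [mul_comm]
  have hca : c.1 * a.1 ≠ ⊥ := hKa
  have hadj_bc := annihilatorIdealGraph_adj_of_mul_eq_bot (c := a) hca hab
    (by convert habK using 1; ring)
  have hadj_ca := annihilatorIdealGraph_adj_of_mul_eq_bot (c := b) hab hbc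
    (by convert habK using 1; ring)
  exact ⟨SimpleGraph.egirth_eq_three hadj hadj_bc hadj_ca, a, b, c, hadj, hadj_bc, hadj_ca, hnot,
    not_adj_annihilatingIdealGraph_of_mul_ne_bot hbc,
    not_adj_annihilatingIdealGraph_of_mul_ne_bot hca⟩

theorem stmt1 (R : Type*) [CommRing R] [Nontrivial R] [IsReduced R] (hdom : ¬IsDomain R)
    (hne : annihilatorIdealGraph R ≠ annihilatingIdealGraph R) :
    (annihilatorIdealGraph R).egirth = 3 ∧
    ∃ a b c : AnnVert R,
      (annihilatorIdealGraph R).Adj a b ∧ (annihilatorIdealGraph R).Adj b c ∧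
      (annihilatorIdealGraph R).Adj c a ∧
      ¬ (annihilatingIdealGraph R).Adj a b ∧ ¬ (annihilatingIdealGraph R).Adj b c ∧
      ¬ (annihilatingIdealGraph R).Adj c a :=
  stmt1_general R hne
end

section
/- Let R be a commutative ring with identity which is not an integral domain, and let I and J be distinct nonzero annihilating ideals of R. If I and J are adjacent in the annihilator-ideal graph A_I(R), then I ∩ Ann_R(J) ≠ (0) and J ∩ Ann_R(I) ≠ (0). Moreover, if R is reduced, then the converse also holds: if I ∩ Ann_R(J) ≠ (0) and J ∩ Ann_R(I) ≠ (0), then I and J are adjacent in A_I(R). -/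
/-
If `r` annihilates `IJ` but neither `I` nor `J`, then `rI` is a nonzero ideal inside
`I ∩ Ann(J)`, and symmetrically for `rJ`. Conversely, for a reduced ring and nonzero
`a ∈ I ∩ Ann(J)`, `b ∈ J ∩ Ann(I)`, the element `a + b` annihilates `IJ`, but
`(a + b)a = a² ≠ 0` and `(a + b)b = b² ≠ 0`, so it annihilates neither `I` nor `J`.
-/

namespace Ideal

variable {R : Type*} [CommRing R] {I J : Ideal R}

theorem annihilator_sup_le_annihilator_mul :
    I.annihilator ⊔ J.annihilator ≤ (I * J).annihilator :=
  sup_le (Submodule.annihilator_mono mul_le_left) (Submodule.annihilator_mono mul_le_right)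

theorem coe_annihilator_mul_ne_union_iff :
    ((I * J).annihilator : Set R) ≠ ↑I.annihilator ∪ ↑J.annihilator ↔
      ∃ r ∈ (I * J).annihilator, r ∉ I.annihilator ∧ r ∉ J.annihilator := by
  have hsub : (↑I.annihilator ∪ ↑J.annihilator : Set R) ⊆ ↑(I * J).annihilator :=
    Set.union_subset (fun _ h ↦ annihilator_sup_le_annihilator_mul (Submodule.mem_sup_left h))
      (fun _ h ↦ annihilator_sup_le_annihilator_mul (Submodule.mem_sup_right h))
  rw [Ne, Set.Subset.antisymm_iff, and_iff_left hsub, Set.not_subset]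
  simp only [SetLike.mem_coe, Set.mem_union, not_or]

theorem mul_mem_annihilator_of_mem_annihilator_mul {r x : R}
    (hr : r ∈ (I * J).annihilator) (hx : x ∈ I) : r * x ∈ J.annihilator := by
  refine Submodule.mem_annihilator.mpr fun y hy ↦ ?_
  rw [smul_eq_mul, mul_assoc]
  exact Submodule.mem_annihilator.mp hr _ (mul_mem_mul hx hy)

theorem inf_annihilator_ne_bot_of_mem_annihilator_mul {r : R}
    (hr : r ∈ (I * J).annihilator) (hrI : r ∉ I.annihilator) : I ⊓ J.annihilator ≠ ⊥ := by
  obtain ⟨x, hxI, hrx⟩ : ∃ x ∈ I, r * x ≠ 0 := by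
    contrapose! hrI
    exact Submodule.mem_annihilator.mpr hrI
  exact (Submodule.ne_bot_iff _).mpr
    ⟨r * x, ⟨mul_mem_left _ r hxI, mul_mem_annihilator_of_mem_annihilator_mul hr hxI⟩, hrx⟩

theorem add_notMem_annihilator [IsReduced R] {a b : R} (ha : a ∈ I) (ha0 : a ≠ 0)
    (hb : b ∈ I.annihilator) : a + b ∉ I.annihilator := fun hab ↦ by
  have hba : b * a = 0 := Submodule.mem_annihilator.mp hb a ha
  have hsq : (a + b) * a = a ^ 2 := by rw [add_mul, hba, add_zero, sq]
  exact pow_ne_zero 2 ha0 (hsq ▸ Submodule.mem_annihilator.mp hab a ha)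

end Ideal

theorem stmt4_general (R : Type*) [CommRing R]
    (I J : AnnVert R) (hIJ : I ≠ J) :
    ((annihilatorIdealGraph R).Adj I J →
      I.1 ⊓ Submodule.annihilator J.1 ≠ ⊥ ∧ J.1 ⊓ Submodule.annihilator I.1 ≠ ⊥) ∧
    (IsReduced R →
      (I.1 ⊓ Submodule.annihilator J.1 ≠ ⊥ ∧ J.1 ⊓ Submodule.annihilator I.1 ≠ ⊥) →
      (annihilatorIdealGraph R).Adj I J) := by
  refine ⟨fun ⟨_, hadj⟩ ↦ ?_, fun _ ⟨hI, hJ⟩ ↦ ⟨hIJ, ?_⟩⟩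
  · obtain ⟨r, hr, hrI, hrJ⟩ := Ideal.coe_annihilator_mul_ne_union_iff.mp hadj
    exact ⟨Ideal.inf_annihilator_ne_bot_of_mem_annihilator_mul hr hrI,
      Ideal.inf_annihilator_ne_bot_of_mem_annihilator_mul (mul_comm I.1 J.1 ▸ hr) hrJ⟩
  · obtain ⟨a, ⟨haI, haJ⟩, ha0⟩ := (Submodule.ne_bot_iff _).mp hI
    obtain ⟨b, ⟨hbJ, hbI⟩, hb0⟩ := (Submodule.ne_bot_iff _).mp hJ
    refine Ideal.coe_annihilator_mul_ne_union_iff.mpr ⟨a + b, ?_, ?_, ?_⟩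
    · exact Ideal.annihilator_sup_le_annihilator_mul
        (add_comm b a ▸ Submodule.add_mem_sup hbI haJ)
    · exact Ideal.add_notMem_annihilator haI ha0 hbI
    · exact add_comm b a ▸ Ideal.add_notMem_annihilator hbJ hb0 haJ

theorem stmt4 (R : Type*) [CommRing R] [Nontrivial R] (hdom : ¬IsDomain R)
    (I J : AnnVert R) (hIJ : I ≠ J) :
    ((annihilatorIdealGraph R).Adj I J →
      I.1 ⊓ Submodule.annihilator J.1 ≠ ⊥ ∧ J.1 ⊓ Submodule.annihilator I.1 ≠ ⊥) ∧
    (IsReduced R →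
      (I.1 ⊓ Submodule.annihilator J.1 ≠ ⊥ ∧ J.1 ⊓ Submodule.annihilator I.1 ≠ ⊥) →
      (annihilatorIdealGraph R).Adj I J) :=
  stmt4_general R I J hIJ
end

section
/- Let R be a non-reduced commutative ring with identity which is not an integral domain, and suppose that the set Z(R) of zero-divisors of R is not an ideal of R. Then the annihilator-ideal graph A_I(R) is not equal to the annihilating-ideal graph 𝔸𝔾(R). -/
/-! Since `Z(R)` is closed under multiplication by `R`, it fails to be an ideal only if two
zero-divisors `x`, `y` have a regular sum `x + y`. When moreover `xy ≠ 0`, the vertices `(x)` and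
`(y)` are not adjacent in `𝔸𝔾(R)`, while they are adjacent in `A_I(R)`: their annihilators meet in
`Ann(x + y) = 0`, so the union `Ann(x) ∪ Ann(y)` is not an additive group and cannot be the ideal
`Ann(xy)`. When `xy = 0`, a nonzero `a` with `a² = 0` has `ax ≠ 0` or `ay ≠ 0`, say `ax ≠ 0`; then
`x` and `y + a` are zero-divisors (`ax` kills `y + a`) with regular sum and `x(y + a) = ax ≠ 0`. -/

open scoped nonZeroDivisors

section

variable {R : Type*} [CommRing R]

theorem IsNilpotent.add_mem_nonZeroDivisors {s a : R} (hs : s ∈ R⁰) (ha : IsNilpotent a) :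
    s + a ∈ R⁰ := by
  obtain ⟨n, hn⟩ := ha
  refine mem_nonZeroDivisors_iff_left.mpr fun v hv => ?_
  suffices ∀ m : ℕ, a ^ m * v = 0 → v = 0 from this n (by rw [hn, zero_mul])
  intro m
  induction m with
  | zero => simp
  | succ m ih =>
    intro hm
    refine ih (mul_left_mem_nonZeroDivisors_eq_zero_iff hs |>.mp ?_)
    linear_combination a ^ m * hv - hm

theorem exists_notMem_nonZeroDivisors_add_mem [Nontrivial R]
    (hZ : ¬ ∃ I : Ideal R, (I : Set R) = {x : R | ∃ y : R, y ≠ 0 ∧ x * y = 0}) :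
    ∃ x y : R, x ∉ R⁰ ∧ y ∉ R⁰ ∧ x + y ∈ R⁰ := by
  by_contra! hadd
  refine hZ ⟨{ carrier := (R⁰ : Set R)ᶜ
               add_mem' := hadd _ _
               zero_mem' := zero_notMem_nonZeroDivisors
               smul_mem' := fun c x hx hcx => hx (mul_mem_nonZeroDivisors.mp hcx).2 }, ?_⟩
  ext x
  simp [notMem_nonZeroDivisors_iff_left, Set.Nonempty, and_comm]

theorem exists_notMem_nonZeroDivisors_add_mem_mul_ne_zero [Nontrivial R] (hnred : ¬IsReduced R)
    (hZ : ¬ ∃ I : Ideal R, (I : Set R) = {x : R | ∃ y : R, y ≠ 0 ∧ x * y = 0}) :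
    ∃ x y : R, x ∉ R⁰ ∧ y ∉ R⁰ ∧ x + y ∈ R⁰ ∧ x * y ≠ 0 := by
  obtain ⟨x, y, hx, hy, hxy⟩ := exists_notMem_nonZeroDivisors_add_mem hZ
  rcases ne_or_eq (x * y) 0 with hmul | hmul
  · exact ⟨x, y, hx, hy, hxy, hmul⟩
  obtain ⟨a, ha2, ha0⟩ : ∃ a : R, a ^ 2 = 0 ∧ a ≠ 0 := by
    simpa [isReduced_iff_pow_one_lt 2 one_lt_two] using hnred
  wlog hax : a * x ≠ 0 generalizing x y
  · refine this y x hy hx (add_comm x y ▸ hxy) (mul_comm x y ▸ hmul) fun hay => ha0 ?_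
    refine mul_left_mem_nonZeroDivisors_eq_zero_iff hxy |>.mp ?_
    linear_combination (not_not.mp hax) + hay
  refine ⟨x, y + a, hx, fun hya => hax ?_, ?_, ?_⟩
  · exact mul_left_mem_nonZeroDivisors_eq_zero_iff hya |>.mp <| by
      linear_combination a * hmul + x * ha2
  · exact add_assoc x y a ▸ IsNilpotent.add_mem_nonZeroDivisors hxy ⟨2, ha2⟩
  · rwa [mul_add, hmul, zero_add, mul_comm]

namespace Ideal

theorem mem_annihilator_span_singleton_iff {x r : R} :
    r ∈ Submodule.annihilator (span {x}) ↔ x * r = 0 := by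
  rw [span, Submodule.mem_annihilator_span_singleton, smul_eq_mul, mul_comm]

theorem annihilator_span_singleton_ne_bot_iff {x : R} :
    Submodule.annihilator (span {x}) ≠ ⊥ ↔ x ∉ R⁰ := by
  simp [Submodule.ne_bot_iff, notMem_nonZeroDivisors_iff_left, Set.Nonempty, mul_comm]

theorem annihilator_span_singleton_inf_eq_bot {x y : R} (hxy : x + y ∈ R⁰) :
    Submodule.annihilator (span {x}) ⊓ Submodule.annihilator (span {y}) = ⊥ := by
  refine eq_bot_iff.mpr fun r hr => ?_
  obtain ⟨hx, hy⟩ := Submodule.mem_inf.mp hr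
  rw [mem_annihilator_span_singleton_iff] at hx hy
  exact mul_left_mem_nonZeroDivisors_eq_zero_iff hxy |>.mp <| by rw [add_mul, hx, hy, add_zero]

end Ideal

def AnnVert.span {x : R} (hx0 : x ≠ 0) (hx : x ∉ R⁰) : AnnVert R :=
  ⟨Ideal.span {x}, by rwa [Ne, Ideal.span_singleton_eq_bot],
    Ideal.annihilator_span_singleton_ne_bot_iff.mpr hx⟩

theorem annihilatorIdealGraph_adj_of_annihilator_inf_eq_bot {I J : AnnVert R}
    (h : Submodule.annihilator I.1 ⊓ Submodule.annihilator J.1 = ⊥) :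
    (annihilatorIdealGraph R).Adj I J := by
  obtain ⟨u, hu, hu0⟩ := Submodule.ne_bot_iff _ |>.mp I.2.2
  obtain ⟨v, hv, hv0⟩ := Submodule.ne_bot_iff _ |>.mp J.2.2
  have eq_zero : ∀ {r}, r ∈ Submodule.annihilator I.1 → r ∈ Submodule.annihilator J.1 →
      r = 0 :=
    fun hI hJ => (Submodule.mem_bot R).mp (h ▸ ⟨hI, hJ⟩)
  refine ⟨fun hIJ => hu0 (eq_zero hu (hIJ ▸ hu)), fun hunion => ?_⟩
  have huv : u + v ∈ Submodule.annihilator (I.1 * J.1) :=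
    add_mem (Submodule.annihilator_mono Ideal.mul_le_left hu)
      (Submodule.annihilator_mono Ideal.mul_le_right hv)
  rw [← SetLike.mem_coe, hunion] at huv
  rcases huv with huv | huv
  · exact hv0 (eq_zero ((Submodule.add_mem_iff_right _ hu).mp huv) hv)
  · exact hu0 (eq_zero hu ((Submodule.add_mem_iff_left _ hv).mp huv))

theorem annihilatorIdealGraph_ne_annihilatingIdealGraph_of_add_mem_nonZeroDivisors {x y : R}
    (hx : x ∉ R⁰) (hy : y ∉ R⁰) (hxy : x + y ∈ R⁰) (hmul : x * y ≠ 0) :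
    annihilatorIdealGraph R ≠ annihilatingIdealGraph R := fun hG => by
  have hadj := annihilatorIdealGraph_adj_of_annihilator_inf_eq_bot
    (I := AnnVert.span (left_ne_zero_of_mul hmul) hx)
    (J := AnnVert.span (right_ne_zero_of_mul hmul) hy)
    (Ideal.annihilator_span_singleton_inf_eq_bot hxy)
  rw [hG] at hadj
  exact hmul <| Ideal.span_singleton_eq_bot.mp <|
    Ideal.span_singleton_mul_span_singleton x y ▸ hadj.2

end

theorem stmt12_general (R : Type*) [CommRing R] [Nontrivial R]
    (hnred : ¬IsReduced R)
    (hZ : ¬ ∃ I : Ideal R, (I : Set R) = {x : R | ∃ y : R, y ≠ 0 ∧ x * y = 0}) :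
    annihilatorIdealGraph R ≠ annihilatingIdealGraph R := by
  obtain ⟨x, y, hx, hy, hxy, hmul⟩ := exists_notMem_nonZeroDivisors_add_mem_mul_ne_zero hnred hZ
  exact annihilatorIdealGraph_ne_annihilatingIdealGraph_of_add_mem_nonZeroDivisors hx hy hxy hmul

theorem stmt12 (R : Type*) [CommRing R] [Nontrivial R] (hdom : ¬IsDomain R)
    (hnred : ¬IsReduced R)
    (hZ : ¬ ∃ I : Ideal R, (I : Set R) = {x : R | ∃ y : R, y ≠ 0 ∧ x * y = 0}) :
    annihilatorIdealGraph R ≠ annihilatingIdealGraph R :=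
  stmt12_general R hnred hZ
end

section
/- Let R be a non-reduced commutative ring with identity which is not an integral domain. Then any two distinct nonzero nilpotent ideals of R are adjacent in the annihilator-ideal graph A_I(R); that is, the induced subgraph of A_I(R) on the nonzero nilpotent ideals is a complete graph. -/
/-! If `Ann(IJ)` were the union `Ann(I) ∪ Ann(J)`, then, being an additive group, it would equal
one of them, say `Ann(J)`. But for nilpotent `I` and nonzero `J`, multiplying by `I` strictly
enlarges the annihilator: if `Ann(IJ) = Ann(J)` then inductively `Ann(IᵏJ) = Ann(J)` for all `k`,
and `Iⁿ = 0` forces `Ann(J) = R`, i.e. `J = 0`. -/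

namespace Ideal

variable {R : Type*} [CommRing R]

lemma mem_annihilator_mul_iff {I J : Ideal R} {x : R} :
    x ∈ Submodule.annihilator (I * J) ↔ ∀ a ∈ I, x * a ∈ Submodule.annihilator J := by
  rw [Submodule.mem_annihilator', Ideal.mul_le]
  simp [Submodule.mem_annihilator, mul_assoc]

lemma annihilator_lt_annihilator_mul_of_isNilpotent {I J : Ideal R} (hI : IsNilpotent I)
    (hJ : J ≠ ⊥) : Submodule.annihilator J < Submodule.annihilator (I * J) := by
  refine lt_of_le_of_ne (Submodule.annihilator_mono mul_le_right) fun h ↦ hJ ?_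
  obtain ⟨n, hn⟩ := hI
  have hpow (k : ℕ) : Submodule.annihilator (I ^ k * J) ≤ Submodule.annihilator J := by
    induction k with
    | zero => simp
    | succ k ih =>
      intro x hx
      rw [pow_succ', mul_comm I, mul_assoc] at hx
      exact ih (mem_annihilator_mul_iff.mpr fun a ha ↦ h ▸ mem_annihilator_mul_iff.mp hx a ha)
  have := hpow n
  rwa [hn, zero_mul, Submodule.zero_eq_bot, Submodule.annihilator_bot, top_le_iff,
    Submodule.annihilator_eq_top_iff] at this

end Ideal

theorem annihilatorIdealGraph_adj_of_isNilpotent {R : Type*} [CommRing R] {I J : AnnVert R}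
    (hIJ : I ≠ J) (hI : IsNilpotent I.1) (hJ : IsNilpotent J.1) :
    (annihilatorIdealGraph R).Adj I J := by
  refine ⟨hIJ, fun h ↦ ?_⟩
  rcases (AddSubgroupClass.subset_union (G := R)).mp h.le with hle | hle
  · exact (Ideal.annihilator_lt_annihilator_mul_of_isNilpotent hJ I.2.1).not_ge (by rwa [mul_comm])
  · exact (Ideal.annihilator_lt_annihilator_mul_of_isNilpotent hI J.2.1).not_ge hle

theorem stmt13_general (R : Type*) [CommRing R]
    (I J : AnnVert R) (hIJ : I ≠ J)
    (hI : ∃ n : ℕ, 0 < n ∧ I.1 ^ n = ⊥) (hJ : ∃ n : ℕ, 0 < n ∧ J.1 ^ n = ⊥) :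
    (annihilatorIdealGraph R).Adj I J := by
  obtain ⟨m, -, hIm⟩ := hI
  obtain ⟨n, -, hJn⟩ := hJ
  exact annihilatorIdealGraph_adj_of_isNilpotent hIJ ⟨m, hIm⟩ ⟨n, hJn⟩

theorem stmt13 (R : Type*) [CommRing R] [Nontrivial R] (hdom : ¬IsDomain R)
    (hnred : ¬IsReduced R)
    (I J : AnnVert R) (hIJ : I ≠ J)
    (hI : ∃ n : ℕ, 0 < n ∧ I.1 ^ n = ⊥) (hJ : ∃ n : ℕ, 0 < n ∧ J.1 ^ n = ⊥) :
    (annihilatorIdealGraph R).Adj I J :=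
  stmt13_general R I J hIJ hI hJ
end

section
/- Let R be a non-reduced commutative ring with identity which is not an integral domain, suppose R is not a principal ideal ring, and suppose Nil(R)² ≠ (0). Then the annihilator-ideal graph A_I(R) is not equal to the annihilating-ideal graph 𝔸𝔾(R), and the girth of A_I(R) equals 3. -/
/-!
A triangle of ideals `I, J, K` with `IK = JK = 0` but `IJ ≠ 0`, together with an element that
annihilates `IJ` but neither `I` nor `J`, is a triangle of `A_I(R)` whose edge `IJ` is not an
edge of `𝔸𝔾(R)`. Such triangles come from nilpotents. If `a² = b² = 0` and `ab ≠ 0`, take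
`(a), (b), (ab)` with witness `a + b`. If `x` has nilpotency index `n ≥ 3`, take
`(x), (b), (x^(n-1))` with witness `x`, for any `b` with `x²b = 0`, `xb ≠ 0` and `(b) ≠ (x)`:
for `n ≥ 4` the power `b = x^(n-2)` works, and for `n = 3` the absence of such a `b` forces
`Ann(x²) ⊆ (x)` and then `(x)` to be the only prime ideal, so `R` is a principal ideal ring.
-/

namespace SimpleGraph

lemma egirth_eq_three_of_adj {V : Type*} {G : SimpleGraph V} {a b c : V}
    (hab : G.Adj a b) (hac : G.Adj a c) (hbc : G.Adj b c) : G.egirth = 3 := by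
  classical
  have hclique : ¬G.CliqueFree 3 := fun h =>
    h {a, b, c} (is3Clique_triple_iff.mpr ⟨hab, hac, hbc⟩)
  rw [cliqueFree_iff, not_isEmpty_iff] at hclique
  obtain ⟨f⟩ := hclique
  exact le_antisymm ((IsContained.egirth_le ⟨f⟩).trans_eq (egirth_top (by simp)))
    three_le_egirth

end SimpleGraph

section

variable {R : Type*} [CommRing R]

lemma annihilator_ne_bot_of_mul_eq_bot {I K : Ideal R} (hK : K ≠ ⊥) (h : I * K = ⊥) :
    Submodule.annihilator I ≠ ⊥ := fun hann =>
  hK <| le_bot_iff.mp <|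
    hann ▸ Submodule.le_annihilator_iff.mpr (by rwa [Ideal.smul_eq_mul, mul_comm])

lemma eq_zero_of_eq_mul_of_isNilpotent {x y : R} (hy : IsNilpotent y) (h : x = y * x) : x = 0 :=
  hy.isUnit_one_sub.mul_right_eq_zero.mp (by rw [sub_mul, one_mul, ← h, sub_self])

lemma exists_isNilpotent_mul_ne_zero_of_nilradical_sq_ne_bot (h : nilradical R ^ 2 ≠ ⊥) :
    ∃ a b : R, IsNilpotent a ∧ IsNilpotent b ∧ a * b ≠ 0 := by
  contrapose! h
  rw [sq, eq_bot_iff, Ideal.mul_le]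
  exact fun a ha b hb => (h a b ha hb).symm ▸ Submodule.zero_mem _

namespace annihilatorIdealGraph

theorem ne_and_egirth_eq_three_of_triangle {I J K : Ideal R} (hIJ : I ≠ J) (hK : K ≠ ⊥)
    (hIK : I * K = ⊥) (hJK : J * K = ⊥) (hIJ₀ : I * J ≠ ⊥) {r : R}
    (hr : r ∈ Submodule.annihilator (I * J)) (hrI : r ∉ Submodule.annihilator I)
    (hrJ : r ∉ Submodule.annihilator J) :
    annihilatorIdealGraph R ≠ annihilatingIdealGraph R ∧
      (annihilatorIdealGraph R).egirth = 3 := by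
  have hI : I ≠ ⊥ := by rintro rfl; exact hIJ₀ (Submodule.bot_mul J)
  have hJ : J ≠ ⊥ := by rintro rfl; exact hIJ₀ (Submodule.mul_bot I)
  let vI : AnnVert R := ⟨I, hI, annihilator_ne_bot_of_mul_eq_bot hK hIK⟩
  let vJ : AnnVert R := ⟨J, hJ, annihilator_ne_bot_of_mul_eq_bot hK hJK⟩
  let vK : AnnVert R := ⟨K, hK, annihilator_ne_bot_of_mul_eq_bot hI (by rwa [mul_comm])⟩
  have hvIJ : (annihilatorIdealGraph R).Adj vI vJ := by
    refine ⟨Subtype.coe_ne_coe.mp hIJ, fun h => ?_⟩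
    have hr' : r ∈ ((Submodule.annihilator (I * J) : Ideal R) : Set R) := hr
    rw [h] at hr'
    exact hr'.elim hrI hrJ
  -- `I * J ≠ ⊥` separates `K` from `I` and `J`, as `K` kills both.
  have hvIK : (annihilatingIdealGraph R).Adj vI vK :=
    ⟨Subtype.coe_ne_coe.mp fun h : I = K => hIJ₀ (by rw [h, mul_comm, hJK]), hIK⟩
  have hvJK : (annihilatingIdealGraph R).Adj vJ vK :=
    ⟨Subtype.coe_ne_coe.mp fun h : J = K => hIJ₀ (by rw [h, hIK]), hJK⟩
  exact ⟨fun h => hIJ₀ (h ▸ hvIJ).2, SimpleGraph.egirth_eq_three_of_adj hvIJ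
    (annihilatingIdealGraph_le_annihilatorIdealGraph hvIK)
    (annihilatingIdealGraph_le_annihilatorIdealGraph hvJK)⟩

theorem ne_and_egirth_eq_three_of_elements {a b k r : R}
    (hspan : Ideal.span {a} ≠ Ideal.span {b}) (hk : k ≠ 0) (hak : a * k = 0) (hbk : b * k = 0)
    (hab₀ : a * b ≠ 0) (hrab : r * (a * b) = 0) (hra : r * a ≠ 0) (hrb : r * b ≠ 0) :
    annihilatorIdealGraph R ≠ annihilatingIdealGraph R ∧
      (annihilatorIdealGraph R).egirth = 3 := by
  simp only [Ne, ← Ideal.span_singleton_eq_bot, ← Ideal.span_singleton_mul_span_singleton]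
    at hk hak hbk hab₀
  refine ne_and_egirth_eq_three_of_triangle hspan hk hak hbk hab₀ (r := r) ?_ ?_ ?_
  · rw [Ideal.span_singleton_mul_span_singleton]
    exact (Submodule.mem_annihilator_span_singleton _ _).mpr hrab
  · exact fun h => hra ((Submodule.mem_annihilator_span_singleton _ _).mp h)
  · exact fun h => hrb ((Submodule.mem_annihilator_span_singleton _ _).mp h)

theorem ne_and_egirth_eq_three_of_sq_eq_zero {a b : R} (ha : a ^ 2 = 0) (hb : b ^ 2 = 0)
    (hab : a * b ≠ 0) :
    annihilatorIdealGraph R ≠ annihilatingIdealGraph R ∧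
      (annihilatorIdealGraph R).egirth = 3 := by
  have hspan : Ideal.span {a} ≠ Ideal.span {b} := fun h => by
    obtain ⟨c, rfl⟩ := Ideal.mem_span_singleton'.mp (h ▸ Ideal.mem_span_singleton_self b)
    exact hab (by linear_combination c * ha)
  refine ne_and_egirth_eq_three_of_elements (k := a * b) (r := a + b) hspan hab
    (by linear_combination b * ha) (by linear_combination a * hb) hab
    (by linear_combination b * ha + a * hb) ?_ ?_
  · rwa [show (a + b) * a = a * b by linear_combination ha]
  · rwa [show (a + b) * b = a * b by linear_combination hb]

theorem ne_and_egirth_eq_three_of_isNilpotent {x b : R} (hx : IsNilpotent x) (hx2 : x ^ 2 ≠ 0)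
    (hb : x ^ 2 * b = 0) (hxb : x * b ≠ 0) (hne : Ideal.span {x} ≠ Ideal.span {b}) :
    annihilatorIdealGraph R ≠ annihilatingIdealGraph R ∧
      (annihilatorIdealGraph R).egirth = 3 := by
  have : Nontrivial R := nontrivial_of_ne _ _ hx2
  set n := nilpotencyClass x
  have hn : 3 ≤ n := by
    by_contra! hn
    exact hx2 (pow_eq_zero_of_le (by omega) (pow_nilpotencyClass hx))
  refine ne_and_egirth_eq_three_of_elements (k := x ^ (n - 1)) (r := x) hne
    (pow_pred_nilpotencyClass hx) ?_ ?_ hxb (by linear_combination hb) (by rwa [← sq]) hxb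
  · rw [← pow_succ', Nat.sub_add_cancel (by omega), pow_nilpotencyClass hx]
  · rw [show n - 1 = 2 + (n - 3) by omega, pow_add]
    linear_combination x ^ (n - 3) * hb

end annihilatorIdealGraph

lemma exists_sq_mul_eq_zero_of_pow_three_ne_zero {x : R} (hx : IsNilpotent x)
    (hx3 : x ^ 3 ≠ 0) :
    ∃ b, x ^ 2 * b = 0 ∧ x * b ≠ 0 ∧ Ideal.span {x} ≠ Ideal.span {b} := by
  have : Nontrivial R := nontrivial_of_ne _ _ hx3
  set n := nilpotencyClass x
  have hn : 4 ≤ n := by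
    by_contra! hn
    exact hx3 (pow_eq_zero_of_le (by omega) (pow_nilpotencyClass hx))
  refine ⟨x ^ (n - 2), ?_, ?_, fun h => ?_⟩
  · rw [← pow_add, show 2 + (n - 2) = n by omega, pow_nilpotencyClass hx]
  · rw [← pow_succ', show n - 2 + 1 = n - 1 by omega]
    exact pow_pred_nilpotencyClass hx
  · obtain ⟨c, hc⟩ := Ideal.mem_span_singleton'.mp (h ▸ Ideal.mem_span_singleton_self x)
    have hx0 : x = 0 := by
      refine eq_zero_of_eq_mul_of_isNilpotent (y := c * x ^ (n - 3))
        ((Commute.all _ _).isNilpotent_mul_left (hx.pow_of_pos (by omega))) ?_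
      rw [mul_assoc, ← pow_succ, show n - 3 + 1 = n - 2 by omega, hc]
    exact hx3 (by rw [hx0, zero_pow three_ne_zero])

lemma exists_sq_mul_eq_zero_of_not_isPrincipalIdealRing {x : R} (hx3 : x ^ 3 = 0)
    (hx2 : x ^ 2 ≠ 0) (hR : ¬IsPrincipalIdealRing R) :
    ∃ b, x ^ 2 * b = 0 ∧ x * b ≠ 0 ∧ Ideal.span {x} ≠ Ideal.span {b} := by
  by_contra! H
  have hann : ∀ y, x ^ 2 * y = 0 → y ∈ Ideal.span {x} := by
    intro y hy
    by_cases hxy : x * y = 0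
    · have h := H (x + y) (by linear_combination hx3 + hy)
        (by rwa [mul_add, hxy, add_zero, ← sq])
      have hmem : x + y ∈ Ideal.span {x} := h ▸ Ideal.mem_span_singleton_self _
      exact (Ideal.add_mem_iff_right _ (Ideal.mem_span_singleton_self x)).mp hmem
    · exact (H y hy hxy).symm ▸ Ideal.mem_span_singleton_self y
  refine hR (.of_prime fun P hP => ⟨x, ?_⟩)
  have hxP : x ∈ P := hP.mem_of_pow_mem 3 (hx3 ▸ P.zero_mem)
  refine le_antisymm (fun p hp => ?_) ((Ideal.span_singleton_le_iff_mem _).mpr hxP)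
  -- For `p ∉ (x)`, `b = px` gives `x = dpx`, so `1 - dp ∈ Ann(x²) ⊆ (x) ⊆ P`.
  by_contra hpx
  have hxpx : x * (p * x) ≠ 0 := fun h => hpx (hann p (by linear_combination h))
  obtain ⟨d, hd⟩ := Ideal.mem_span_singleton'.mp
    ((H _ (by linear_combination p * hx3) hxpx).symm ▸ Ideal.mem_span_singleton_self x)
  have hdp : 1 - d * p ∈ P :=
    (Ideal.span_singleton_le_iff_mem _).mpr hxP (hann _ (by linear_combination (-x) * hd))
  exact hP.ne_top ((P.eq_top_iff_one).mpr (by simpa using P.add_mem hdp (P.mul_mem_left d hp)))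

end

theorem stmt15_general (R : Type*) [CommRing R] (hnpir : ¬IsPrincipalIdealRing R)
    (hnil : (nilradical R) ^ 2 ≠ ⊥) :
    annihilatorIdealGraph R ≠ annihilatingIdealGraph R ∧
    (annihilatorIdealGraph R).egirth = 3 := by
  obtain ⟨a, b, ha, hb, hab⟩ := exists_isNilpotent_mul_ne_zero_of_nilradical_sq_ne_bot hnil
  by_cases h : ∀ x : R, IsNilpotent x → x ^ 2 = 0
  · exact annihilatorIdealGraph.ne_and_egirth_eq_three_of_sq_eq_zero (h a ha) (h b hb) hab
  push Not at h
  obtain ⟨x, hx, hx2⟩ := h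
  obtain ⟨c, hc, hxc, hne⟩ :
      ∃ c, x ^ 2 * c = 0 ∧ x * c ≠ 0 ∧ Ideal.span {x} ≠ Ideal.span {c} := by
    by_cases hx3 : x ^ 3 = 0
    · exact exists_sq_mul_eq_zero_of_not_isPrincipalIdealRing hx3 hx2 hnpir
    · exact exists_sq_mul_eq_zero_of_pow_three_ne_zero hx hx3
  exact annihilatorIdealGraph.ne_and_egirth_eq_three_of_isNilpotent hx hx2 hc hxc hne

theorem stmt15 (R : Type*) [CommRing R] [Nontrivial R] (hdom : ¬IsDomain R)
    (hnred : ¬IsReduced R) (hnpir : ¬IsPrincipalIdealRing R)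
    (hnil : (nilradical R) ^ 2 ≠ ⊥) :
    annihilatorIdealGraph R ≠ annihilatingIdealGraph R ∧
    (annihilatorIdealGraph R).egirth = 3 :=
  stmt15_general R hnpir hnil
end

section
/- Let R be a commutative ring with identity which is not an integral domain, and let I be a minimal ideal of R (a nonzero ideal containing no nonzero proper subideal). Then I is a vertex of both the annihilating-ideal graph 𝔸𝔾(R) and the annihilator-ideal graph A_I(R), and the neighborhood of I in 𝔸𝔾(R) equals the neighborhood of I in A_I(R); that is, for every nonzero annihilating ideal J ≠ I, I and J are adjacent in A_I(R) if and only if IJ = (0). -/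
/-! A minimal ideal `I` absorbs every ideal that does not kill it: `J * I ≠ ⊥` forces `J * I = I`.
If `Ann I = 0`, then for `b * c = 0` with `c ≠ 0` we get `b I = b (c I) = 0`, so `b = 0`: the ring
would be a domain. When `I J ≠ 0`, absorption gives `Ann (I J) = Ann I ⊇ Ann J`, so `I` and `J` are
not adjacent in `A_I(R)`; when `I J = 0`, `Ann (I J) = R` is not the union of the two proper ideals
`Ann I` and `Ann J`. -/

theorem Submodule.coe_union_ne_univ {R M : Type*} [Ring R] [AddCommGroup M] [Module R M]
    {K L : Submodule R M} (hK : K ≠ ⊤) (hL : L ≠ ⊤) : (K : Set M) ∪ L ≠ Set.univ := by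
  intro h
  have hcover : ((⊤ : Submodule R M) : Set M) ⊆ K ∪ L := by rw [top_coe, h]
  rcases AddSubgroupClass.subset_union.mp hcover with hK' | hL'
  · exact hK (top_le_iff.mp hK')
  · exact hL (top_le_iff.mp hL')

namespace Ideal

variable {R : Type*} [CommRing R] {I J : Ideal R}

theorem mem_annihilator_iff_span_singleton_mul_eq_bot {r : R} :
    r ∈ Submodule.annihilator I ↔ span {r} * I = ⊥ := by
  rw [← span_singleton_le_iff_mem, Submodule.le_annihilator_iff]
  rfl

theorem mul_eq_right_of_isAtom (hI : IsAtom I) (h : J * I ≠ ⊥) : J * I = I :=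
  (hI.le_iff.mp Ideal.mul_le_right).resolve_left h

theorem noZeroDivisors_of_isAtom_of_annihilator_eq_bot (hI : IsAtom I)
    (h : Submodule.annihilator I = ⊥) : NoZeroDivisors R where
  eq_zero_or_eq_zero_of_mul_eq_zero {b c} hbc := by
    refine or_iff_not_imp_right.mpr fun hc => ?_
    have hcI : span {c} * I = I := by
      refine mul_eq_right_of_isAtom hI fun hc' => hc ?_
      rwa [← mem_annihilator_iff_span_singleton_mul_eq_bot, h, Submodule.mem_bot] at hc'
    have hbI : span {b} * I = ⊥ := by
      rw [← hcI, ← mul_assoc, span_singleton_mul_span_singleton, hbc, span_singleton_eq_bot.mpr rfl,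
        Submodule.bot_mul]
    rwa [← mem_annihilator_iff_span_singleton_mul_eq_bot, h, Submodule.mem_bot] at hbI

theorem annihilator_ne_bot_of_isAtom (hdom : ¬IsDomain R) (hI : IsAtom I) :
    Submodule.annihilator I ≠ ⊥ := by
  intro h
  have := noZeroDivisors_of_isAtom_of_annihilator_eq_bot hI h
  obtain ⟨x, -, hx⟩ := Submodule.exists_mem_ne_zero_of_ne_bot hI.1
  have := nontrivial_of_ne x 0 hx
  exact hdom (NoZeroDivisors.to_isDomain R)

theorem coe_annihilator_mul_eq_union_of_isAtom (hI : IsAtom I) (h : I * J ≠ ⊥) :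
    (Submodule.annihilator (I * J) : Set R) =
      ↑(Submodule.annihilator I) ∪ ↑(Submodule.annihilator J) := by
  have hIJ : I * J = I := by
    rw [mul_comm] at h ⊢
    exact mul_eq_right_of_isAtom hI h
  have hJI : Submodule.annihilator J ≤ Submodule.annihilator I :=
    hIJ ▸ Submodule.annihilator_mono Ideal.mul_le_right
  rw [hIJ, Set.union_eq_self_of_subset_right hJI]

theorem coe_annihilator_mul_ne_union_of_mul_eq_bot (hI : I ≠ ⊥) (hJ : J ≠ ⊥) (h : I * J = ⊥) :
    (Submodule.annihilator (I * J) : Set R) ≠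
      ↑(Submodule.annihilator I) ∪ ↑(Submodule.annihilator J) := by
  rw [h, Submodule.annihilator_bot, Submodule.top_coe, ne_comm]
  exact Submodule.coe_union_ne_univ (Submodule.annihilator_eq_top_iff.not.mpr hI)
    (Submodule.annihilator_eq_top_iff.not.mpr hJ)

end Ideal

theorem annihilatorIdealGraph_adj_iff_of_isAtom {R : Type*} [CommRing R] {I J : AnnVert R}
    (hI : IsAtom I.1) (hIJ : I ≠ J) : (annihilatorIdealGraph R).Adj I J ↔ I.1 * J.1 = ⊥ :=
  ⟨fun ⟨_, hAdj⟩ => by_contra fun h => hAdj (Ideal.coe_annihilator_mul_eq_union_of_isAtom hI h),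
    fun h => ⟨hIJ, Ideal.coe_annihilator_mul_ne_union_of_mul_eq_bot I.2.1 J.2.1 h⟩⟩

theorem stmt16_general (R : Type*) [CommRing R] (hdom : ¬IsDomain R)
    (I : Ideal R) (hI : IsAtom I) :
    ∃ hv : I ≠ ⊥ ∧ Submodule.annihilator I ≠ ⊥,
      ∀ J : AnnVert R, J ≠ ⟨I, hv⟩ →
        ((annihilatorIdealGraph R).Adj ⟨I, hv⟩ J ↔ I * J.1 = ⊥) :=
  ⟨⟨hI.1, Ideal.annihilator_ne_bot_of_isAtom hdom hI⟩, fun _ hJ =>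
    annihilatorIdealGraph_adj_iff_of_isAtom hI hJ.symm⟩

theorem stmt16 (R : Type*) [CommRing R] [Nontrivial R] (hdom : ¬IsDomain R)
    (I : Ideal R) (hI : IsAtom I) :
    ∃ hv : I ≠ ⊥ ∧ Submodule.annihilator I ≠ ⊥,
      ∀ J : AnnVert R, J ≠ ⟨I, hv⟩ →
        ((annihilatorIdealGraph R).Adj ⟨I, hv⟩ J ↔ I * J.1 = ⊥) :=
  stmt16_general R hdom I hI
end
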